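/- Let μ₊ and μ₋ be Conley–Zehnder iteration sequences with μ₊(1) − μ₋(1) = 1 and with μ₋ of hyperbolic type, and let k₁, …, k_n be positive integers with k = k₁ + ⋯ + k_n. Then (n − 1) + μ₊(k) − (μ₋(k₁) + ⋯ + μ₋(k_n)) ≥ n. (This is case (iii) of the paper's proposition: a genus-zero branched k-fold cover with one positive puncture of an index-1 cylinder whose negative asymptotic orbit γ₋ is hyperbolic has Fredholm index at least n.) -/

import Mathlib

/-!
Since `⌊kθ⌋ ≥ k⌊θ⌋`, every Conley–Zehnder iteration sequence satisfies `μ(k) ≥ k(μ(1) − 1) + 1`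
for `k ≥ 1`. For hyperbolic `μ₋` the sum `∑ μ₋(kᵢ)` is exactly `k·μ₋(1) = k(μ₊(1) − 1)`, so the
index is at least `(n − 1) + 1 = n`.
-/

/-- A Conley–Zehnder iteration sequence of elliptic type: there is a
non-integer real rotation angle `θ` with `μ k = 2⌊kθ⌋ + 1` for all `k ≥ 1`. -/
def IsEllipticCZSeq (μ : ℕ → ℤ) : Prop :=
  ∃ θ : ℝ, (∀ n : ℤ, θ ≠ (n : ℝ)) ∧ ∀ k : ℕ, 1 ≤ k → μ k = 2 * ⌊(k : ℝ) * θ⌋ + 1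

/-- A Conley–Zehnder iteration sequence of hyperbolic type: there is an
integer `r` with `μ k = k·r` for all `k ≥ 1`. -/
def IsHyperbolicCZSeq (μ : ℕ → ℤ) : Prop :=
  ∃ r : ℤ, ∀ k : ℕ, 1 ≤ k → μ k = (k : ℤ) * r

/-- A Conley–Zehnder iteration sequence: either elliptic or hyperbolic type. -/
def IsCZSeq (μ : ℕ → ℤ) : Prop :=
  IsEllipticCZSeq μ ∨ IsHyperbolicCZSeq μ

theorem Int.natCast_mul_floor_le_floor_natCast_mul (k : ℕ) (θ : ℝ) :
    (k : ℤ) * ⌊θ⌋ ≤ ⌊(k : ℝ) * θ⌋ := by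
  rw [Int.le_floor]
  push_cast
  exact mul_le_mul_of_nonneg_left (Int.floor_le θ) k.cast_nonneg

theorem IsEllipticCZSeq.iterate_lower_bound {μ : ℕ → ℤ} (hμ : IsEllipticCZSeq μ) {k : ℕ}
    (hk : 1 ≤ k) : (k : ℤ) * (μ 1 - 1) + 1 ≤ μ k := by
  obtain ⟨θ, -, hθ⟩ := hμ
  have h1 : μ 1 = 2 * ⌊θ⌋ + 1 := by simpa using hθ 1 le_rfl
  rw [hθ k hk, h1]
  linarith [Int.natCast_mul_floor_le_floor_natCast_mul k θ]

theorem IsHyperbolicCZSeq.apply_eq_mul_apply_one {μ : ℕ → ℤ} (hμ : IsHyperbolicCZSeq μ)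
    {k : ℕ} (hk : 1 ≤ k) : μ k = k * μ 1 := by
  obtain ⟨r, hr⟩ := hμ
  rw [hr k hk, hr 1 le_rfl, Nat.cast_one, one_mul]

theorem IsHyperbolicCZSeq.iterate_lower_bound {μ : ℕ → ℤ} (hμ : IsHyperbolicCZSeq μ) {k : ℕ}
    (hk : 1 ≤ k) : (k : ℤ) * (μ 1 - 1) + 1 ≤ μ k := by
  rw [hμ.apply_eq_mul_apply_one hk]
  have : (1 : ℤ) ≤ k := by exact_mod_cast hk
  linarith

theorem IsCZSeq.iterate_lower_bound {μ : ℕ → ℤ} (hμ : IsCZSeq μ) {k : ℕ} (hk : 1 ≤ k) :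
    (k : ℤ) * (μ 1 - 1) + 1 ≤ μ k :=
  hμ.elim (·.iterate_lower_bound hk) (·.iterate_lower_bound hk)

theorem IsHyperbolicCZSeq.sum_apply {ι : Type*} {μ : ℕ → ℤ} (hμ : IsHyperbolicCZSeq μ)
    (s : Finset ι) {K : ι → ℕ} (hK : ∀ i ∈ s, 1 ≤ K i) :
    ∑ i ∈ s, μ (K i) = (∑ i ∈ s, K i : ℕ) * μ 1 := by
  rw [Nat.cast_sum, Finset.sum_mul]
  exact Finset.sum_congr rfl fun i hi => hμ.apply_eq_mul_apply_one (hK i hi)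

theorem cz_cover_cylinder_index_neg_hyperbolic_general (μpos μneg : ℕ → ℤ)
    (hpos : IsCZSeq μpos)
    (h : μpos 1 - μneg 1 = 1) (hhyp : IsHyperbolicCZSeq μneg)
    (n : ℕ) (hn : 1 ≤ n) (K : Fin n → ℕ) (hK : ∀ i, 1 ≤ K i)
    (k : ℕ) (hk : k = ∑ i, K i) :
    ((n : ℤ) - 1) + μpos k - ∑ i, μneg (K i) ≥ n := by
  have hnk : n ≤ k := by
    simpa [hk] using Finset.card_nsmul_le_sum Finset.univ K 1 fun i _ => hK i
  have hsum : ∑ i, μneg (K i) = k * μneg 1 := by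
    rw [hhyp.sum_apply Finset.univ fun i _ => hK i, hk]
  have hbound := hpos.iterate_lower_bound (hn.trans hnk)
  rw [show μpos 1 - 1 = μneg 1 by omega] at hbound
  rw [hsum]
  linarith

/-- Case (iii) of the proposition on covers of nontrivial cylinders: if
μ₊(1) − μ₋(1) = 1 with μ₋ of hyperbolic type and k = k₁ + ⋯ + kₙ with
each kᵢ ≥ 1, then (n − 1) + μ₊(k) − ∑ᵢ μ₋(kᵢ) ≥ n. -/
theorem cz_cover_cylinder_index_neg_hyperbolic (μpos μneg : ℕ → ℤ)
    (hpos : IsCZSeq μpos) (hneg : IsCZSeq μneg)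
    (h : μpos 1 - μneg 1 = 1) (hhyp : IsHyperbolicCZSeq μneg)
    (n : ℕ) (hn : 1 ≤ n) (K : Fin n → ℕ) (hK : ∀ i, 1 ≤ K i)
    (k : ℕ) (hk : k = ∑ i, K i) :
    ((n : ℤ) - 1) + μpos k - ∑ i, μneg (K i) ≥ n :=
  cz_cover_cylinder_index_neg_hyperbolic_general μpos μneg hpos h hhyp n hn K hK k hk
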